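/- arXiv:2011.11959 — 4 statements merged into one kernel-verified Lean document; each statement's English description precedes it below -/
import Mathlib

section
/- If the robust min-max monitor raises a warning on an input v_op (i.e., there exists an index j with h (f v_op) j < L j or h (f v_op) j > U j), then there does not exist a training input v ∈ D such that |f v_op i − f v i| ≤ Δ for every index i. -/
theorem bounds_of_forall_abs_sub_le {ι κ : Type*} {g : (ι → ℝ) → κ → ℝ} {p x : ι → ℝ}
    {Δ : ℝ} {l u : κ → ℝ}
    (hpe : ∀ δ : ι → ℝ, (∀ i, |δ i| ≤ Δ) → ∀ j, l j ≤ g (p + δ) j ∧ g (p + δ) j ≤ u j)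
    (hx : ∀ i, |x i - p i| ≤ Δ) (j : κ) :
    l j ≤ g x j ∧ g x j ≤ u j := by
  simpa only [add_sub_cancel] using hpe (x - p) hx j

theorem robust_minmax_monitor_sound_general
    {d0 dp dk : ℕ}
    (f : (Fin d0 → ℝ) → (Fin dp → ℝ))
    (h : (Fin dp → ℝ) → (Fin dk → ℝ))
    (D : Finset (Fin d0 → ℝ)) (hD : D.Nonempty)
    (Δ : ℝ)
    (l u : (Fin d0 → ℝ) → Fin dk → ℝ)
    (hpe : ∀ v ∈ D, ∀ δ : Fin dp → ℝ, (∀ i, |δ i| ≤ Δ) →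
      ∀ j, l v j ≤ h (f v + δ) j ∧ h (f v + δ) j ≤ u v j)
    (v_op : Fin d0 → ℝ)
    (hwarn : ∃ j, h (f v_op) j < D.inf' hD (fun v => l v j) ∨
      D.sup' hD (fun v => u v j) < h (f v_op) j) :
    ¬ ∃ v ∈ D, ∀ i, |f v_op i - f v i| ≤ Δ := by
  rintro ⟨v, hv, hclose⟩
  obtain ⟨j, hj⟩ := hwarn
  obtain ⟨hl, hu⟩ := bounds_of_forall_abs_sub_le (hpe v hv) hclose j
  rcases hj with hbelow | habove
  · exact hbelow.not_ge (Finset.inf'_le_of_le _ hv hl)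
  · exact habove.not_ge (Finset.le_sup'_of_le _ hv hu)

/-- Soundness/robustness of the robust min-max monitor: a warning implies no
training input is Δ-close (at the perturbation layer) to the operational input. -/
theorem robust_minmax_monitor_sound
    {d0 dp dk : ℕ}
    (f : (Fin d0 → ℝ) → (Fin dp → ℝ))
    (h : (Fin dp → ℝ) → (Fin dk → ℝ))
    (D : Finset (Fin d0 → ℝ)) (hD : D.Nonempty)
    (Δ : ℝ) (hΔ : 0 ≤ Δ)
    (l u : (Fin d0 → ℝ) → Fin dk → ℝ)
    (hpe : ∀ v ∈ D, ∀ δ : Fin dp → ℝ, (∀ i, |δ i| ≤ Δ) →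
      ∀ j, l v j ≤ h (f v + δ) j ∧ h (f v + δ) j ≤ u v j)
    (v_op : Fin d0 → ℝ)
    (hwarn : ∃ j, h (f v_op) j < D.inf' hD (fun v => l v j) ∨
      D.sup' hD (fun v => u v j) < h (f v_op) j) :
    ¬ ∃ v ∈ D, ∀ i, |f v_op i - f v i| ≤ Δ :=
  robust_minmax_monitor_sound_general f h D hD Δ l u hpe v_op hwarn
end

section
/- If the robust on-off monitor raises a warning on an input v_op (i.e., ab (h (f v_op)) ∉ M), then there does not exist a training input v ∈ D such that |f v_op i − f v i| ≤ Δ for every index i. -/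
theorem decide_lt_of_le_of_le {α : Type*} [LinearOrder α] {a b c x : α}
    (hax : a ≤ x) (hxb : x ≤ b) :
    (c < a → decide (c < x) = true) ∧ (b ≤ c → decide (c < x) = false) :=
  ⟨fun hca => decide_eq_true (hca.trans_le hax),
    fun hbc => decide_eq_false (not_lt.2 (hxb.trans hbc))⟩

theorem robust_onoff_monitor_sound_general
    {d0 dp dk : ℕ}
    (f : (Fin d0 → ℝ) → (Fin dp → ℝ))
    (h : (Fin dp → ℝ) → (Fin dk → ℝ))
    (D : Finset (Fin d0 → ℝ))
    (Δ : ℝ)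
    (l u : (Fin d0 → ℝ) → Fin dk → ℝ)
    (hpe : ∀ v ∈ D, ∀ δ : Fin dp → ℝ, (∀ i, |δ i| ≤ Δ) →
      ∀ j, l v j ≤ h (f v + δ) j ∧ h (f v + δ) j ≤ u v j)
    (c : Fin dk → ℝ)
    (v_op : Fin d0 → ℝ)
    (hwarn : (fun j => decide (c j < h (f v_op) j)) ∉
      {b : Fin dk → Bool | ∃ v ∈ D, ∀ j,
        (c j < l v j → b j = true) ∧ (u v j ≤ c j → b j = false)}) :
    ¬ ∃ v ∈ D, ∀ i, |f v_op i - f v i| ≤ Δ := by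
  rintro ⟨v, hv, hclose⟩
  refine hwarn ⟨v, hv, fun j => ?_⟩
  have hbounds := hpe v hv (f v_op - f v) hclose j
  rw [add_sub_cancel] at hbounds
  exact decide_lt_of_le_of_le hbounds.1 hbounds.2

/-- Soundness/robustness of the robust on-off monitor: a warning implies no
training input is Δ-close (at the perturbation layer) to the operational input. -/
theorem robust_onoff_monitor_sound
    {d0 dp dk : ℕ}
    (f : (Fin d0 → ℝ) → (Fin dp → ℝ))
    (h : (Fin dp → ℝ) → (Fin dk → ℝ))
    (D : Finset (Fin d0 → ℝ)) (hD : D.Nonempty)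
    (Δ : ℝ) (hΔ : 0 ≤ Δ)
    (l u : (Fin d0 → ℝ) → Fin dk → ℝ)
    (hpe : ∀ v ∈ D, ∀ δ : Fin dp → ℝ, (∀ i, |δ i| ≤ Δ) →
      ∀ j, l v j ≤ h (f v + δ) j ∧ h (f v + δ) j ≤ u v j)
    (c : Fin dk → ℝ)
    (v_op : Fin d0 → ℝ)
    (hwarn : (fun j => decide (c j < h (f v_op) j)) ∉
      {b : Fin dk → Bool | ∃ v ∈ D, ∀ j,
        (c j < l v j → b j = true) ∧ (u v j ≤ c j → b j = false)}) :
    ¬ ∃ v ∈ D, ∀ i, |f v_op i - f v i| ≤ Δ :=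
  robust_onoff_monitor_sound_general f h D Δ l u hpe c v_op hwarn
end

section
/- Let c1 < c2 < c3 be real numbers and l ≤ u. Define code : ℝ → Fin 4 by code x = 3 if x > c3, code x = 2 if c2 ≤ x ≤ c3, code x = 1 if c1 < x < c2, and code x = 0 if x ≤ c1. Define the set S ⊆ Fin 4 by the case table: S = {3} if l > c3; S = {2} if c3 ≥ u and l ≥ c2; S = {1} if c2 > u and l > c1; S = {0} if c1 ≥ u; S = {0, 1} if c2 > u > c1 and c1 ≥ l; S = {1, 2} if c3 ≥ u ≥ c2 and c2 > l > c1; S = {2, 3} if u > c3 and c3 ≥ l ≥ c2; S = {0, 1, 2} if c1 ≥ l and c3 ≥ u ≥ c2; S = {1, 2, 3} if u > c3 and c2 > l > c1; and S = {0, 1, 2, 3} otherwise. Then S equals the image of code over the closed interval [l, u], i.e., S = { code x | l ≤ x ≤ u }. -/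
/-- The 2-bit interval code of a real value with thresholds `c1 < c2 < c3`:
`3` if `x > c3`, `2` if `c2 ≤ x ≤ c3`, `1` if `c1 < x < c2`, `0` if `x ≤ c1`. -/
noncomputable def codeAt (c1 c2 c3 x : ℝ) : Fin 4 :=
  if c3 < x then 3 else if c2 ≤ x then 2 else if c1 < x then 1 else 0

/-!
The fibres of `codeAt` are the intervals `Iic c1`, `Ioo c1 c2`, `Icc c2 c3` and `Ioi c3`, so a
code is realised on `[l, u]` exactly when `[l, u]` meets its fibre, which amounts to two
comparisons of endpoints. Each branch of the case table is then a routine check of these four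
conditions.
-/

namespace Set

theorem mem_image_iff_inter_preimage_nonempty {α β : Type*} {f : α → β} {s : Set α} {y : β} :
    y ∈ f '' s ↔ (s ∩ f ⁻¹' {y}).Nonempty := by
  rw [← inter_singleton_nonempty, image_inter_nonempty_iff]

variable {α : Type*} [LinearOrder α] {l u a b : α}

theorem Icc_inter_Iic_nonempty_iff (hlu : l ≤ u) : (Icc l u ∩ Iic a).Nonempty ↔ l ≤ a :=
  ⟨fun ⟨_, ⟨hlx, _⟩, hxa⟩ => hlx.trans hxa, fun h => ⟨l, ⟨le_rfl, hlu⟩, h⟩⟩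

theorem Icc_inter_Ioi_nonempty_iff (hlu : l ≤ u) : (Icc l u ∩ Ioi a).Nonempty ↔ a < u :=
  ⟨fun ⟨_, ⟨_, hxu⟩, hax⟩ => hax.trans_le hxu, fun h => ⟨u, ⟨hlu, le_rfl⟩, h⟩⟩

theorem Icc_inter_Icc_nonempty_iff (hlu : l ≤ u) (hab : a ≤ b) :
    (Icc l u ∩ Icc a b).Nonempty ↔ l ≤ b ∧ a ≤ u := by
  rw [Icc_inter_Icc, nonempty_Icc, sup_le_iff, le_inf_iff, le_inf_iff]
  tauto

theorem Icc_inter_Ioo_nonempty_iff [DenselyOrdered α] (hlu : l ≤ u) (hab : a < b) :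
    (Icc l u ∩ Ioo a b).Nonempty ↔ l < b ∧ a < u := by
  refine ⟨fun ⟨_, ⟨hlx, hxu⟩, hax, hxb⟩ => ⟨hlx.trans_lt hxb, hax.trans_le hxu⟩, ?_⟩
  rintro ⟨hlb, hau⟩
  rcases lt_or_ge a l with hal | hla
  · exact ⟨l, ⟨le_rfl, hlu⟩, hal, hlb⟩
  · obtain ⟨x, hax, hxub⟩ := exists_between (lt_min hau hab)
    exact ⟨x, ⟨hla.trans hax.le, hxub.le.trans (min_le_left _ _)⟩, hax,
      hxub.trans_le (min_le_right _ _)⟩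

end Set

open Set

section codeAt

variable {c1 c2 c3 l u : ℝ}

theorem codeAt_preimage_three : codeAt c1 c2 c3 ⁻¹' {3} = Ioi c3 := by
  ext x
  simp only [codeAt, mem_preimage, mem_singleton_iff, mem_Ioi]
  split_ifs <;> grind

theorem codeAt_preimage_two : codeAt c1 c2 c3 ⁻¹' {2} = Icc c2 c3 := by
  ext x
  simp only [codeAt, mem_preimage, mem_singleton_iff, mem_Icc]
  split_ifs <;> grind

theorem codeAt_preimage_one (h23 : c2 ≤ c3) : codeAt c1 c2 c3 ⁻¹' {1} = Ioo c1 c2 := by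
  ext x
  simp only [codeAt, mem_preimage, mem_singleton_iff, mem_Ioo]
  split_ifs <;> grind

theorem codeAt_preimage_zero (h12 : c1 < c2) (h23 : c2 ≤ c3) :
    codeAt c1 c2 c3 ⁻¹' {0} = Iic c1 := by
  ext x
  simp only [codeAt, mem_preimage, mem_singleton_iff, mem_Iic]
  split_ifs <;> grind

theorem three_mem_codeAt_image_Icc (hlu : l ≤ u) :
    3 ∈ codeAt c1 c2 c3 '' Icc l u ↔ c3 < u := by
  rw [mem_image_iff_inter_preimage_nonempty, codeAt_preimage_three,
    Icc_inter_Ioi_nonempty_iff hlu]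

theorem two_mem_codeAt_image_Icc (h23 : c2 ≤ c3) (hlu : l ≤ u) :
    2 ∈ codeAt c1 c2 c3 '' Icc l u ↔ l ≤ c3 ∧ c2 ≤ u := by
  rw [mem_image_iff_inter_preimage_nonempty, codeAt_preimage_two,
    Icc_inter_Icc_nonempty_iff hlu h23]

theorem one_mem_codeAt_image_Icc (h12 : c1 < c2) (h23 : c2 ≤ c3) (hlu : l ≤ u) :
    1 ∈ codeAt c1 c2 c3 '' Icc l u ↔ l < c2 ∧ c1 < u := by
  rw [mem_image_iff_inter_preimage_nonempty, codeAt_preimage_one h23,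
    Icc_inter_Ioo_nonempty_iff hlu h12]

theorem zero_mem_codeAt_image_Icc (h12 : c1 < c2) (h23 : c2 ≤ c3) (hlu : l ≤ u) :
    0 ∈ codeAt c1 c2 c3 '' Icc l u ↔ l ≤ c1 := by
  rw [mem_image_iff_inter_preimage_nonempty, codeAt_preimage_zero h12 h23,
    Icc_inter_Iic_nonempty_iff hlu]

end codeAt

/-- The robust interval abstraction of a neuron bounded in `[l, u]` is exactly the
set of 2-bit codes realizable by values in `[l, u]`. -/
theorem robust_interval_abstraction_exact (c1 c2 c3 l u : ℝ)
    (h12 : c1 < c2) (h23 : c2 < c3) (hlu : l ≤ u) :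
    (if c3 < l then ({3} : Set (Fin 4))
     else if u ≤ c3 ∧ c2 ≤ l then {2}
     else if u < c2 ∧ c1 < l then {1}
     else if u ≤ c1 then {0}
     else if u < c2 ∧ c1 < u ∧ l ≤ c1 then {0, 1}
     else if u ≤ c3 ∧ c2 ≤ u ∧ l < c2 ∧ c1 < l then {1, 2}
     else if c3 < u ∧ l ≤ c3 ∧ c2 ≤ l then {2, 3}
     else if l ≤ c1 ∧ u ≤ c3 ∧ c2 ≤ u then {0, 1, 2}
     else if c3 < u ∧ l < c2 ∧ c1 < l then {1, 2, 3}
     else {0, 1, 2, 3}) =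
    {b : Fin 4 | ∃ x : ℝ, l ≤ x ∧ x ≤ u ∧ b = codeAt c1 c2 c3 x} := by
  have h_image : {b : Fin 4 | ∃ x : ℝ, l ≤ x ∧ x ≤ u ∧ b = codeAt c1 c2 c3 x} =
      codeAt c1 c2 c3 '' Icc l u := by
    ext b
    simp only [mem_ofPred_eq, mem_image, mem_Icc, and_assoc, eq_comm]
  rw [h_image]
  split_ifs <;> ext b <;> fin_cases b <;>
    simp [zero_mem_codeAt_image_Icc h12 h23.le hlu, one_mem_codeAt_image_Icc h12 h23.le hlu,
      two_mem_codeAt_image_Icc h23.le hlu, three_mem_codeAt_image_Icc hlu] <;>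
    grind
end

section
/- The standard interval activation monitor generalizes the min-max monitor: suppose for every index j the thresholds are chosen as c3 j = U⁰ j (the maximum of h (f v) j over v ∈ D), c2 j = L⁰ j (the minimum of h (f v) j over v ∈ D), and c1 j is any real with c1 j < L⁰ j (and c2 j < c3 j, i.e., L⁰ j < U⁰ j). Then for every input v_op, the standard interval monitor raises a warning on v_op if and only if the standard min-max monitor raises a warning on v_op, i.e., iff there exists j with h (f v_op) j < L⁰ j or h (f v_op) j > U⁰ j. -/
/-! With `c2 = L⁰` and `c3 = U⁰`, every training input has the constant code `2`, so the
interval monitor stores exactly one word; an input then passes it iff each of its coordinates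
has code `2`, i.e. lies in `[L⁰ j, U⁰ j]`, which is the min-max monitor's acceptance test. -/

theorem codeAt_eq_two_iff {c1 c2 c3 x : ℝ} : codeAt c1 c2 c3 x = 2 ↔ c2 ≤ x ∧ x ≤ c3 := by
  unfold codeAt
  split_ifs <;> simp_all

theorem interval_monitor_generalizes_minmax_general
    {d0 dp dk : ℕ}
    (f : (Fin d0 → ℝ) → (Fin dp → ℝ))
    (h : (Fin dp → ℝ) → (Fin dk → ℝ))
    (D : Finset (Fin d0 → ℝ)) (hD : D.Nonempty)
    (c1 c2 c3 : Fin dk → ℝ)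
    (hc3 : ∀ j, c3 j = D.sup' hD (fun v => h (f v) j))
    (hc2 : ∀ j, c2 j = D.inf' hD (fun v => h (f v) j))
    (v_op : Fin d0 → ℝ) :
    ((fun j => codeAt (c1 j) (c2 j) (c3 j) (h (f v_op) j)) ∉
      {w : Fin dk → Fin 4 | ∃ v ∈ D,
        w = fun j => codeAt (c1 j) (c2 j) (c3 j) (h (f v) j)}) ↔
    (∃ j, h (f v_op) j < D.inf' hD (fun v => h (f v) j) ∨
      D.sup' hD (fun v => h (f v) j) < h (f v_op) j) := by
  have code_eq_two_iff : ∀ v, (fun j => codeAt (c1 j) (c2 j) (c3 j) (h (f v) j)) = (fun _ => 2) ↔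
      ∀ j, D.inf' hD (fun v => h (f v) j) ≤ h (f v) j ∧
        h (f v) j ≤ D.sup' hD (fun v => h (f v) j) := fun v => by
    simp only [funext_iff, codeAt_eq_two_iff, hc2, hc3]
  have train_code_eq_two : ∀ v ∈ D,
      (fun j => codeAt (c1 j) (c2 j) (c3 j) (h (f v) j)) = (fun _ => 2) := fun v hv =>
    (code_eq_two_iff v).mpr fun j => ⟨D.inf'_le _ hv, D.le_sup' (fun v => h (f v) j) hv⟩
  have stored_eq : {w : Fin dk → Fin 4 | ∃ v ∈ D,
      w = fun j => codeAt (c1 j) (c2 j) (c3 j) (h (f v) j)} = {fun _ => 2} := by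
    obtain ⟨v₀, hv₀⟩ := hD
    ext w
    simp only [Set.mem_ofPred_eq, Set.mem_singleton_iff]
    exact ⟨fun ⟨v, hv, hw⟩ => hw.trans (train_code_eq_two v hv),
      fun hw => ⟨v₀, hv₀, hw.trans (train_code_eq_two v₀ hv₀).symm⟩⟩
  rw [stored_eq, Set.mem_singleton_iff, code_eq_two_iff]
  simp only [not_forall, not_and_or, not_le]

/-- The standard interval activation monitor generalizes the min-max monitor: with
`c3 = U⁰`, `c2 = L⁰` and any `c1 < L⁰`, it warns exactly when the min-max monitor warns. -/
theorem interval_monitor_generalizes_minmax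
    {d0 dp dk : ℕ}
    (f : (Fin d0 → ℝ) → (Fin dp → ℝ))
    (h : (Fin dp → ℝ) → (Fin dk → ℝ))
    (D : Finset (Fin d0 → ℝ)) (hD : D.Nonempty)
    (c1 c2 c3 : Fin dk → ℝ)
    (hc3 : ∀ j, c3 j = D.sup' hD (fun v => h (f v) j))
    (hc2 : ∀ j, c2 j = D.inf' hD (fun v => h (f v) j))
    (hc1 : ∀ j, c1 j < D.inf' hD (fun v => h (f v) j))
    (hlt : ∀ j, D.inf' hD (fun v => h (f v) j) < D.sup' hD (fun v => h (f v) j))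
    (v_op : Fin d0 → ℝ) :
    ((fun j => codeAt (c1 j) (c2 j) (c3 j) (h (f v_op) j)) ∉
      {w : Fin dk → Fin 4 | ∃ v ∈ D,
        w = fun j => codeAt (c1 j) (c2 j) (c3 j) (h (f v) j)}) ↔
    (∃ j, h (f v_op) j < D.inf' hD (fun v => h (f v) j) ∨
      D.sup' hD (fun v => h (f v) j) < h (f v_op) j) :=
  interval_monitor_generalizes_minmax_general f h D hD c1 c2 c3 hc3 hc2 v_op
end
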